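/- arXiv:0910.0635 — 2 statements merged into one kernel-verified Lean document; each statement's English description precedes it below -/
import Mathlib

section
/- For an odd prime p = 2q+1 and a natural number k coprime to p, the product over j = 1 to q of cos(jkπ/p) equals (-1)^((k-1)(p²-1)/8) · 2^(−q). -/
/-!
Put `c = (p + 1) / 2`, the inverse of `2` modulo `p`. Then `(-1)^m cos (mπ/p)` and
`(-1)^m sin (mπ/p)` are the real and imaginary parts of `e^{2πi cm/p}`, so `(-1)^m cos (mπ/p)`
and `|sin (mπ/p)|` are even functions of `m mod p`. For `a` prime to `p`, the residues `±aj`,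
`1 ≤ j ≤ q`, run through `±1, …, ±q` (the observation behind Gauss's lemma), hence
`∏ (-1)^{ja} cos (jaπ/p) = ∏ (-1)^j cos (jπ/p)`: the product for `k` is the product for
`k = 1` times `(-1)^{(k-1)(1 + ⋯ + q)} = (-1)^{(k-1)(p²-1)/8}`. The same argument for `|sin|`
with `a = 2`, combined with `sin 2x = 2 sin x cos x`, gives `∏ cos (jπ/p) = 2^{-q}`.
-/

open Real Finset

theorem Finset.sum_Icc_one_id_mul_two (n : ℕ) : (∑ i ∈ Icc 1 n, i) * 2 = n * (n + 1) := by
  induction n with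
  | zero => simp
  | succ n ih => rw [sum_Icc_succ_top (by omega), add_mul, ih]; ring

theorem Real.sin_nat_mul_pi_div_pos {m n : ℕ} (hm : 0 < m) (hmn : m < n) :
    0 < sin (m * π / n) := by
  have hn : (0 : ℝ) < n := by exact_mod_cast hm.trans hmn
  apply sin_pos_of_pos_of_lt_pi (by positivity)
  rw [div_lt_iff₀ hn, mul_comm]
  exact mul_lt_mul_of_pos_left (by exact_mod_cast hmn) pi_pos

namespace ZMod

theorem prod_Icc_comp_mul_of_even {p : ℕ} [Fact p.Prime] {M : Type*} [CommMonoid M]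
    {f : ZMod p → M} (hf : f.Even) {a : ZMod p} (ha : a ≠ 0) :
    ∏ j ∈ Icc 1 (p / 2), f (a * j) = ∏ j ∈ Icc 1 (p / 2), f j := by
  have hIcc : Icc 1 (p / 2) = Ico 1 (p / 2).succ := (Ico_add_one_right_eq_Icc ..).symm
  calc ∏ j ∈ Icc 1 (p / 2), f (a * j)
      = ∏ j ∈ Icc 1 (p / 2), f ((a * j).valMinAbs.natAbs) :=
        prod_congr rfl fun j _ => by
          rw [natCast_natAbs_valMinAbs]; split_ifs <;> [rfl; exact (hf _).symm]
    _ = (((Ico 1 (p / 2).succ).1.map fun j : ℕ => (a * j).valMinAbs.natAbs).map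
          (fun n : ℕ => f n)).prod := by rw [Multiset.map_map, hIcc]; rfl
    _ = ∏ j ∈ Icc 1 (p / 2), f j := by
        rw [Ico_map_valMinAbs_natAbs_eq_Ico_map_id p a ha, Multiset.map_map, hIcc]; rfl

variable {p : ℕ} [NeZero p]

theorem stdAddChar_half_succ_mul_natCast (hp : Odd p) (m : ℕ) :
    stdAddChar (((p / 2 + 1 : ℕ) : ZMod p) * (m : ZMod p)) =
      Complex.exp (↑(m * π / p + m * π) * Complex.I) := by
  have hc : 2 * ((p / 2 : ℕ) : ℂ) + 1 = p := by
    exact_mod_cast Nat.two_mul_div_two_add_one_of_odd hp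
  have hp0 : (p : ℂ) ≠ 0 := NeZero.ne _
  rw [← Nat.cast_mul, stdAddChar_apply, toCircle_natCast]
  congr 1
  push_cast
  field_simp
  linear_combination (m : ℂ) * hc

theorem re_stdAddChar_half_succ_mul_natCast (hp : Odd p) (m : ℕ) :
    (stdAddChar (((p / 2 + 1 : ℕ) : ZMod p) * (m : ZMod p))).re =
      (-1) ^ m * cos (m * π / p) := by
  rw [stdAddChar_half_succ_mul_natCast hp, Complex.exp_ofReal_mul_I_re, cos_add_nat_mul_pi]

theorem im_stdAddChar_half_succ_mul_natCast (hp : Odd p) (m : ℕ) :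
    (stdAddChar (((p / 2 + 1 : ℕ) : ZMod p) * (m : ZMod p))).im =
      (-1) ^ m * sin (m * π / p) := by
  rw [stdAddChar_half_succ_mul_natCast hp, Complex.exp_ofReal_mul_I_im, sin_add_nat_mul_pi]

end ZMod

section OddPrime

variable {p : ℕ} [Fact p.Prime]

theorem prod_neg_one_pow_mul_cos_mul_pi_div (hp : Odd p) {a : ℕ} (ha : (a : ZMod p) ≠ 0) :
    ∏ j ∈ Icc 1 (p / 2), (-1) ^ (j * a) * cos (j * a * π / p) =
      ∏ j ∈ Icc 1 (p / 2), (-1) ^ j * cos (j * π / p) := by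
  have h := ZMod.prod_Icc_comp_mul_of_even
    (f := fun x : ZMod p => (ZMod.stdAddChar (((p / 2 + 1 : ℕ) : ZMod p) * x)).re)
    (fun x => by simp only [mul_neg, AddChar.map_neg_eq_conj, Complex.conj_re]) ha
  refine (prod_congr rfl fun j _ => ?_).trans (h.trans (prod_congr rfl fun j _ => ?_))
  · rw [← Nat.cast_mul a j, ZMod.re_stdAddChar_half_succ_mul_natCast hp, mul_comm a j,
      Nat.cast_mul]
  · rw [ZMod.re_stdAddChar_half_succ_mul_natCast hp]

theorem prod_abs_sin_mul_pi_div (hp : Odd p) {a : ℕ} (ha : (a : ZMod p) ≠ 0) :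
    ∏ j ∈ Icc 1 (p / 2), |sin (j * a * π / p)| =
      ∏ j ∈ Icc 1 (p / 2), |sin (j * π / p)| := by
  have h := ZMod.prod_Icc_comp_mul_of_even
    (f := fun x : ZMod p => |(ZMod.stdAddChar (((p / 2 + 1 : ℕ) : ZMod p) * x)).im|)
    (fun x => by simp only [mul_neg, AddChar.map_neg_eq_conj, Complex.conj_im, abs_neg]) ha
  refine (prod_congr rfl fun j _ => ?_).trans (h.trans (prod_congr rfl fun j _ => ?_))
  · rw [← Nat.cast_mul a j, ZMod.im_stdAddChar_half_succ_mul_natCast hp, abs_mul,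
      abs_neg_one_pow, one_mul, mul_comm a j, Nat.cast_mul]
  · rw [ZMod.im_stdAddChar_half_succ_mul_natCast hp, abs_mul, abs_neg_one_pow, one_mul]

theorem prod_cos_pi_div (hp : Odd p) :
    ∏ j ∈ Icc 1 (p / 2), cos (j * π / p) = (2 ^ (p / 2))⁻¹ := by
  have hp2 : 2 * (p / 2) + 1 = p := Nat.two_mul_div_two_add_one_of_odd hp
  have h2 : ((2 : ℕ) : ZMod p) ≠ 0 := by
    rw [Ne, ZMod.natCast_eq_zero_iff]
    intro h
    have := (Nat.prime_dvd_prime_iff_eq Fact.out Nat.prime_two).mp h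
    omega
  have hsin : ∀ j ∈ Icc 1 (p / 2), 0 < sin (j * π / p) := fun j hj =>
    sin_nat_mul_pi_div_pos (by grind) (by grind)
  have hsin_two_mul : ∀ j ∈ Icc 1 (p / 2), 0 < sin (j * 2 * π / p) := fun j hj => by
    simpa using sin_nat_mul_pi_div_pos (m := j * 2) (n := p) (by grind) (by grind)
  have hfold : ∏ j ∈ Icc 1 (p / 2), sin (j * 2 * π / p) =
      ∏ j ∈ Icc 1 (p / 2), sin (j * π / p) := by
    have h := prod_abs_sin_mul_pi_div hp h2
    rwa [Nat.cast_ofNat, prod_congr rfl fun j hj => abs_of_pos (hsin_two_mul j hj),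
      prod_congr rfl fun j hj => abs_of_pos (hsin j hj)] at h
  have hdouble : ∏ j ∈ Icc 1 (p / 2), sin (j * 2 * π / p) =
      2 ^ (p / 2) * (∏ j ∈ Icc 1 (p / 2), sin (j * π / p)) *
        ∏ j ∈ Icc 1 (p / 2), cos (j * π / p) := by
    simp_rw [show ∀ j : ℕ, (j : ℝ) * 2 * π / p = 2 * (j * π / p) by intro j; ring,
      sin_two_mul, prod_mul_distrib, prod_const, Nat.card_Icc, Nat.add_sub_cancel]
  refine eq_inv_of_mul_eq_one_right (mul_left_cancel₀ (prod_pos hsin).ne' ?_)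
  linear_combination hdouble.symm.trans hfold

theorem prod_cos_mul_pi_div (hp : Odd p) {k : ℕ} (hk : (k : ZMod p) ≠ 0) :
    ∏ j ∈ Icc 1 (p / 2), cos (j * k * π / p) =
      (-1) ^ ((k - 1) * ∑ j ∈ Icc 1 (p / 2), j) *
        ∏ j ∈ Icc 1 (p / 2), cos (j * π / p) := by
  obtain ⟨k, rfl⟩ :=
    Nat.exists_eq_add_one_of_ne_zero (by rintro rfl; exact hk Nat.cast_zero : k ≠ 0)
  have hsq (n : ℕ) : (-1 : ℝ) ^ n * (-1) ^ n = 1 := by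
    rw [← pow_add]; exact Even.neg_one_pow ⟨n, rfl⟩
  set T := ∑ j ∈ Icc 1 (p / 2), j
  calc ∏ j ∈ Icc 1 (p / 2), cos (j * ↑(k + 1) * π / p)
      = ∏ j ∈ Icc 1 (p / 2),
          (-1) ^ (j * (k + 1)) * ((-1) ^ (j * (k + 1)) * cos (j * ↑(k + 1) * π / p)) :=
        prod_congr rfl fun j _ => by rw [← mul_assoc, hsq, one_mul]
    _ = (-1) ^ ((k + 1) * T) * ∏ j ∈ Icc 1 (p / 2), (-1) ^ j * cos (j * π / p) := by
        rw [prod_mul_distrib, prod_pow_eq_pow_sum, ← sum_mul, mul_comm T,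
          prod_neg_one_pow_mul_cos_mul_pi_div hp hk]
    _ = (-1) ^ (k * T) * ((-1) ^ T * (-1) ^ T) * ∏ j ∈ Icc 1 (p / 2), cos (j * π / p) := by
        rw [prod_mul_distrib, prod_pow_eq_pow_sum]
        ring
    _ = _ := by rw [hsq, mul_one, Nat.add_sub_cancel]

end OddPrime

theorem cos_product_coprime_general (p q k : ℕ) [Fact p.Prime] (hpq : p = 2 * q + 1)
    (hcop : Nat.Coprime k p) :
    ∏ j ∈ Finset.Icc 1 q, Real.cos (j * k * Real.pi / p) =
      (-1) ^ (((k - 1) * (p ^ 2 - 1)) / 8) * (2 : ℝ) ^ (-(q : ℤ)) := by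
  have hp : Odd p := ⟨q, hpq⟩
  have hk : (k : ZMod p) ≠ 0 := ((ZMod.isUnit_iff_coprime k p).mpr hcop).ne_zero
  have hexp : p ^ 2 - 1 = (∑ j ∈ Icc 1 q, j) * 8 := by
    have hsq : p ^ 2 = 4 * (q * (q + 1)) + 1 := by rw [hpq]; ring
    have := sum_Icc_one_id_mul_two q
    omega
  obtain rfl : q = p / 2 := by omega
  rw [hexp, ← mul_assoc, Nat.mul_div_cancel _ (by norm_num), zpow_neg, zpow_natCast,
    prod_cos_mul_pi_div hp hk, prod_cos_pi_div hp]

theorem cos_product_coprime (p q k : ℕ) [Fact p.Prime] (hpq : p = 2 * q + 1)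
    (hk : 0 < k) (hcop : Nat.Coprime k p) :
    ∏ j ∈ Finset.Icc 1 q, Real.cos (j * k * Real.pi / p) =
      (-1) ^ (((k - 1) * (p ^ 2 - 1)) / 8) * (2 : ℝ) ^ (-(q : ℤ)) :=
  cos_product_coprime_general p q k hpq hcop
end

section
/- For an odd prime p and a natural number ℓ with 0 ≤ ℓ ≤ p−1, the sum over j from 1 to p−1 of ((ℓ−j)/p)·j equals (−1/p)·(p·Σ_{j=1}^{p−ℓ−1} (j/p) + Σ_{j=1}^{p−1} (j/p)·j), where (·/p) is the Legendre symbol. -/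
/-!
Write `χ(l - j) = χ(-1) χ(j - l)`. Over a full period the sum `∑ χ(j - l) j` is a shifted copy
of `∑ χ(k) k`: substituting `k ≡ j - l (mod p)` sends `j` to `k + l`, except on the last `l`
residues `k`, where the weight is `k + l - p`. Since `χ` sums to zero over a period, the
corrections add up to `p` times the partial sum of `χ` over `1, …, p - l - 1`.
-/

open Finset

theorem Function.Periodic.sum_range_comp_sub_mul {R : Type*} [CommRing R] {f : ℤ → R}
    {l m : ℕ} (hf : Function.Periodic f (l + m : ℕ)) (hsum : ∑ k ∈ range (l + m), f k = 0) :
    ∑ j ∈ range (l + m), f ((j : ℤ) - l) * j =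
      ∑ k ∈ range (l + m), f k * k + (l + m : ℕ) * ∑ k ∈ range m, f k := by
  have hwrap : ∀ i : ℕ, f ((i : ℤ) - l) = f (m + i) := fun i => by
    rw [← hf]; push_cast; ring_nf
  have hlhs : ∑ j ∈ range (l + m), f ((j : ℤ) - l) * j =
      ∑ i ∈ range l, f (m + i) * i + ∑ k ∈ range m, f k * (l + k) := by
    rw [sum_range_add]
    push_cast
    simp only [hwrap, add_sub_cancel_left]
  have hrhs : ∑ k ∈ range (l + m), f k * k =
      ∑ k ∈ range m, f k * k + ∑ i ∈ range l, f (m + i) * (m + i) := by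
    rw [add_comm l m, sum_range_add]
    push_cast
    rfl
  have hsplit : ∑ k ∈ range m, f k + ∑ i ∈ range l, f (m + i) = 0 := by
    rw [add_comm l m, sum_range_add] at hsum
    exact_mod_cast hsum
  rw [hlhs, hrhs]
  simp only [mul_add, sum_add_distrib, ← sum_mul]
  push_cast
  linear_combination (-(m : R)) * hsplit

theorem ZMod.sum_eq_sum_range_natCast {n : ℕ} [NeZero n] {M : Type*} [AddCommMonoid M]
    (g : ZMod n → M) : ∑ a, g a = ∑ i ∈ range n, g i :=
  sum_nbij' ZMod.val (fun i => i) (fun a _ => mem_range.mpr a.val_lt) (fun _ _ => mem_univ _)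
    (fun _ _ => ZMod.natCast_zmod_val _) (fun _ hi => ZMod.val_natCast_of_lt (mem_range.mp hi))
    (fun a _ => by rw [ZMod.natCast_zmod_val])

namespace legendreSym

variable (p : ℕ) [Fact p.Prime]

theorem periodic : Function.Periodic (legendreSym p) p := fun a => by
  simp [legendreSym]

theorem sum_range_eq_zero (hodd : Odd p) : ∑ k ∈ range p, legendreSym p k = 0 := by
  have hchar : ringChar (ZMod p) ≠ 2 := by
    rw [ZMod.ringChar_zmod_n]
    rintro rfl
    exact Nat.not_odd_iff_even.mpr even_two hodd
  rw [← quadraticChar_sum_zero hchar, ZMod.sum_eq_sum_range_natCast]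
  simp [legendreSym]

end legendreSym

theorem sum_Icc_one_pred_eq_sum_range {M : Type*} [AddCommMonoid M] {f : ℕ → M} (hf : f 0 = 0)
    (n : ℕ) : ∑ j ∈ Icc 1 (n - 1), f j = ∑ j ∈ range n, f j := by
  rw [← sum_erase (range n) hf]
  congr 1
  ext j
  simp only [mem_Icc, mem_erase, mem_range]
  omega

theorem legendre_weighted_sum_minus (p : ℕ) [Fact p.Prime] (hodd : Odd p)
    (l : ℕ) (hl : l ≤ p - 1) :
    ∑ j ∈ Finset.Icc 1 (p - 1), legendreSym p ((l : ℤ) - j) * j =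
      legendreSym p (-1) *
        ((p : ℤ) * ∑ j ∈ Finset.Icc 1 (p - l - 1), legendreSym p j +
          ∑ j ∈ Finset.Icc 1 (p - 1), legendreSym p j * j) := by
  have hp : l + (p - l) = p := by omega
  have hneg : ∀ j : ℕ,
      legendreSym p ((l : ℤ) - j) = legendreSym p (-1) * legendreSym p (j - l) :=
    fun j => by rw [← legendreSym.mul]; ring_nf
  have hper : Function.Periodic (legendreSym p) (l + (p - l) : ℕ) := by
    rw [hp]; exact legendreSym.periodic p
  have hshift :=
    hper.sum_range_comp_sub_mul (by rw [hp]; exact legendreSym.sum_range_eq_zero p hodd)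
  rw [hp] at hshift
  calc ∑ j ∈ Icc 1 (p - 1), legendreSym p ((l : ℤ) - j) * j
      = legendreSym p (-1) * ∑ j ∈ range p, legendreSym p ((j : ℤ) - l) * j := by
        rw [sum_Icc_one_pred_eq_sum_range (by simp), mul_sum]
        exact sum_congr rfl fun j _ => by rw [hneg, mul_assoc]
    _ = legendreSym p (-1) * ((p : ℤ) * ∑ j ∈ range (p - l), legendreSym p j +
          ∑ j ∈ range p, legendreSym p j * j) := by
        rw [hshift, add_comm]
    _ = _ := by
        rw [sum_Icc_one_pred_eq_sum_range (f := fun j : ℕ => legendreSym p j)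
            (by simp [legendreSym.at_zero]),
          sum_Icc_one_pred_eq_sum_range (by simp)]
end
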